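/- arXiv:2310.08806 — 2 statements merged into one kernel-verified Lean document; each statement's English description precedes it below -/
import Mathlib

section
/- If a simple graph G on a finite vertex set is Gaussian, then for every vertex v the smoothing G' = (G*v) ∖ v is Gaussian. -/
open scoped Classical

/-- The local complement `G*c` of a simple graph `G` at a vertex `c`: distinct
vertices `u`, `v` are adjacent in `G*c` iff (`u ~ v` in `G`) XOR (`u` and `v` are
both neighbours of `c` in `G`). -/
def localComplement {V : Type*} (G : SimpleGraph V) (c : V) : SimpleGraph V where
  Adj u v := u ≠ v ∧ Xor' (G.Adj u v) (G.Adj c u ∧ G.Adj c v)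
  symm := ⟨by
    rintro u v ⟨h, hx⟩
    refine ⟨h.symm, ?_⟩
    rwa [G.adj_comm v u, and_comm]⟩
  loopless := ⟨fun u h => h.1 rfl⟩

/-- The smoothing of `G` at `v`: the induced subgraph of the local complement `G*v`
on the set of vertices different from `v`. -/
def smoothing {V : Type*} (G : SimpleGraph V) (v : V) : SimpleGraph {x : V | x ≠ v} :=
  SimpleGraph.induce {x : V | x ≠ v} (localComplement G v)

/-- Adjacency function of a simple graph, with values in `ZMod 2`:
`adjE G x y = 1` iff `x` and `y` are adjacent. -/
noncomputable def adjE {V : Type*} (G : SimpleGraph V) (x y : V) : ZMod 2 :=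
  if G.Adj x y then 1 else 0

/-- The Rosenstiehl form `R x y = E x y + card (N(x) ∩ N(y))` in `ZMod 2`. -/
noncomputable def rosForm {V : Type*} (G : SimpleGraph V) (x y : V) : ZMod 2 :=
  adjE G x y + ((G.neighborSet x ∩ G.neighborSet y).ncard : ZMod 2)

/-- (EN1): every vertex has even degree. -/
def EN1 {V : Type*} (G : SimpleGraph V) : Prop :=
  ∀ x : V, Even (G.neighborSet x).ncard

/-- (EN2): distinct non-adjacent vertices share an even number of neighbours. -/
def EN2 {V : Type*} (G : SimpleGraph V) : Prop :=
  ∀ x y : V, x ≠ y → ¬ G.Adj x y → Even ((G.neighborSet x ∩ G.neighborSet y).ncard)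

/-- (RC): the Rosenstiehl form is a coboundary on the edges. -/
def RC {V : Type*} (G : SimpleGraph V) : Prop :=
  ∃ χ : V → ZMod 2, ∀ x y : V, G.Adj x y → rosForm G x y = χ x + χ y

/-- A graph is Gaussian when it satisfies (EN1), (EN2) and (RC). -/
def Gaussian {V : Type*} (G : SimpleGraph V) : Prop :=
  EN1 G ∧ EN2 G ∧ RC G

/-!
Over `ZMod 2`, write `A x` for the adjacency row of `x` and `a = A v`. Then `G` is Gaussian iff
`A x ⬝ᵥ A y = A x y * (χ x + χ y + 1)` for all `x, y` and some `χ`: the diagonal is (EN1), the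
non-edges are (EN2) and the edges are (RC). The rows of the local complement are
`A x + a x • (a + Pi.single x 1)`, so expanding the dot products with the identity for `G` shows
that `G*v` satisfies it with `χ + a`, up to the rank-one error `a x * a y`. Deleting `v` from the
sums removes exactly the term `(G*v)(x, v) * (G*v)(y, v) = a x * a y`.
-/

section

open Matrix

variable {V : Type*}

lemma adjE_self (G : SimpleGraph V) (x : V) : adjE G x x = 0 := by
  simp [adjE]

lemma adjE_comm (G : SimpleGraph V) (x y : V) : adjE G x y = adjE G y x := by
  simp only [adjE, G.adj_comm]

lemma natCast_ncard_inter_neighborSet [Fintype V] (G : SimpleGraph V) (x y : V) :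
    ((G.neighborSet x ∩ G.neighborSet y).ncard : ZMod 2) = adjE G x ⬝ᵥ adjE G y := by
  have : G.neighborSet x ∩ G.neighborSet y =
      ↑(Finset.univ.filter fun z => G.Adj x z ∧ G.Adj y z) := by
    ext; simp
  rw [this, Set.ncard_coe_finset, Finset.natCast_card_filter]
  simp only [dotProduct, adjE, ite_zero_mul_ite_zero, mul_one]

lemma gaussian_iff_exists_dotProduct_adjE [Fintype V] (G : SimpleGraph V) :
    Gaussian G ↔ ∃ χ : V → ZMod 2,
      ∀ x y, adjE G x ⬝ᵥ adjE G y = adjE G x y * (χ x + χ y + 1) := by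
  simp only [← natCast_ncard_inter_neighborSet]
  constructor
  · rintro ⟨hEN1, hEN2, χ, hRC⟩
    refine ⟨χ, fun x y => ?_⟩
    by_cases hxy : x = y
    · subst hxy
      rw [Set.inter_self, adjE_self, zero_mul, ZMod.natCast_eq_zero_iff_even]
      exact hEN1 x
    by_cases hadj : G.Adj x y
    · have h := hRC x y hadj
      rw [rosForm, adjE, if_pos hadj] at h
      rw [adjE, if_pos hadj, one_mul, ← h, add_right_comm, CharTwo.add_self_eq_zero, zero_add]
    · rw [adjE, if_neg hadj, zero_mul, ZMod.natCast_eq_zero_iff_even]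
      exact hEN2 x y hxy hadj
  · rintro ⟨χ, hχ⟩
    refine ⟨fun x => ?_, fun x y hxy hadj => ?_, χ, fun x y hadj => ?_⟩
    · rw [← ZMod.natCast_eq_zero_iff_even, ← Set.inter_self (G.neighborSet x), hχ, adjE_self,
        zero_mul]
    · rw [← ZMod.natCast_eq_zero_iff_even, hχ, adjE, if_neg hadj, zero_mul]
    · rw [rosForm, hχ, adjE, if_pos hadj, one_mul, add_comm, add_assoc, CharTwo.add_self_eq_zero,
        add_zero]

lemma localComplement_adj (G : SimpleGraph V) (v x y : V) :
    (localComplement G v).Adj x y ↔ x ≠ y ∧ Xor (G.Adj x y) (G.Adj v x ∧ G.Adj v y) :=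
  Iff.rfl

lemma adjE_localComplement (G : SimpleGraph V) (v x : V) :
    adjE (localComplement G v) x = adjE G x + adjE G v x • (adjE G v + Pi.single x 1) := by
  ext z
  by_cases hxz : x = z
  · subst hxz
    have : ∀ a : ZMod 2, a * a + a = 0 := by decide
    simp [adjE_self, this]
  · by_cases hxz' : G.Adj x z <;> by_cases hvx : G.Adj v x <;> by_cases hvz : G.Adj v z <;>
      simp [adjE, localComplement_adj, xor_def, hxz, hxz', hvx, hvz]; decide

lemma dotProduct_adjE_localComplement [Fintype V] {G : SimpleGraph V} {χ : V → ZMod 2}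
    (hχ : ∀ p q, adjE G p ⬝ᵥ adjE G q = adjE G p q * (χ p + χ q + 1)) (v x y : V) :
    adjE (localComplement G v) x ⬝ᵥ adjE (localComplement G v) y =
      adjE (localComplement G v) x y * (χ x + adjE G v x + (χ y + adjE G v y) + 1)
        + adjE G v x * adjE G v y := by
  simp only [adjE_localComplement, add_dotProduct, dotProduct_add, smul_dotProduct,
    dotProduct_smul, single_dotProduct, dotProduct_single, hχ, Pi.add_apply, Pi.smul_apply,
    smul_eq_mul, adjE_self]
  rw [adjE_comm G x v, adjE_comm G y x]
  have idem : ∀ t : ZMod 2, t * t = t := by decide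
  by_cases hxy : x = y
  · subst hxy
    simp only [Pi.single_eq_same]
    grind
  · simp only [Pi.single_eq_of_ne (Ne.symm hxy)]
    grind

lemma adjE_localComplement_apply_center (G : SimpleGraph V) {v x : V} (hx : x ≠ v) :
    adjE (localComplement G v) x v = adjE G v x := by
  rw [adjE_localComplement, Pi.add_apply, Pi.smul_apply, Pi.add_apply, adjE_self,
    Pi.single_eq_of_ne hx.symm, add_zero, smul_eq_mul, mul_zero, add_zero, adjE_comm]

lemma dotProduct_adjE_smoothing [Fintype V] (G : SimpleGraph V) (v : V) (x y : {x : V | x ≠ v}) :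
    adjE (smoothing G v) x ⬝ᵥ adjE (smoothing G v) y =
      adjE (localComplement G v) x ⬝ᵥ adjE (localComplement G v) y
        + adjE G v x * adjE G v y := by
  rw [dotProduct, dotProduct, Fintype.sum_eq_add_sum_subtype_ne _ v,
    adjE_localComplement_apply_center G x.2, adjE_localComplement_apply_center G y.2,
    add_comm (_ * _), add_assoc, CharTwo.add_self_eq_zero, add_zero]
  rfl

end

/-- If `G` is Gaussian then so is its smoothing `(G*v) ∖ v` at every vertex `v`. -/
theorem stmt15 {V : Type*} [Fintype V] (G : SimpleGraph V) (hG : Gaussian G) (v : V) :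
    Gaussian (smoothing G v) := by
  obtain ⟨χ, hχ⟩ := (gaussian_iff_exists_dotProduct_adjE G).1 hG
  refine (gaussian_iff_exists_dotProduct_adjE _).2 ⟨fun x => χ x + adjE G v x, fun x y => ?_⟩
  rw [dotProduct_adjE_smoothing, dotProduct_adjE_localComplement hχ, add_assoc,
    CharTwo.add_self_eq_zero, add_zero]
  rfl
end

section
/- Let σ be a bicolourable chord diagram and φ any framing of σ. Then for all distinct chords x and y that are not interlaced, I_φ(x, y) = card(N(x) ∩ N(y)) in ZMod 2, where N(x) is the set of chords interlaced with x. -/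
/-- The open cyclic arc `(a, b)` in `ZMod (2n)`: the points `a + s` with `0 < s < t`,
where `t = (b - a).val` is the representative of `b - a` in `[0, 2n)`. -/
def arc (n : ℕ) (a b : ZMod (2 * n)) : Set (ZMod (2 * n)) :=
  {x | ∃ s : ℕ, 0 < s ∧ s < (b - a).val ∧ x = a + (s : ZMod (2 * n))}

/-- Two chords with endpoints `{x1, x2}` and `{y1, y2}` are interlaced iff exactly
one of `y1`, `y2` lies in the arc `(x1, x2)`. -/
def Interlaced (n : ℕ) (x1 x2 y1 y2 : ZMod (2 * n)) : Prop :=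
  Xor' (y1 ∈ arc n x1 x2) (y2 ∈ arc n x1 x2)

/-- The number of chords of `σ` interlaced with the chord `{x, σ x}` (each such
chord has exactly one endpoint in the arc `(x, σ x)`). -/
noncomputable def interNbrCount (n : ℕ) (σ : Equiv.Perm (ZMod (2 * n)))
    (x : ZMod (2 * n)) : ℕ :=
  ({a : ZMod (2 * n) | a ∈ arc n x (σ x) ∧ σ a ∉ arc n x (σ x)}).ncard

/-- The number of chords of `σ` interlaced with both the chord `{x, σ x}` and the
chord `{y, σ y}` (counted by their unique endpoint in the arc `(x, σ x)`). -/
noncomputable def commonNbrCount (n : ℕ) (σ : Equiv.Perm (ZMod (2 * n)))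
    (x y : ZMod (2 * n)) : ℕ :=
  ({a : ZMod (2 * n) | a ∈ arc n x (σ x) ∧ σ a ∉ arc n x (σ x) ∧
      Interlaced n y (σ y) a (σ a)}).ncard

/-- A framing of the chord diagram `σ`, encoded as the set `S` of `∞`-endpoints:
exactly one endpoint of each chord belongs to `S`. -/
def IsFraming (n : ℕ) (σ : Equiv.Perm (ZMod (2 * n))) (S : Set (ZMod (2 * n))) : Prop :=
  ∀ i, i ∈ S ↔ σ i ∉ S

open scoped Classical in
/-- The `∞`-endpoint of the chord through `i`, for the framing `S`. -/
noncomputable def inftyEnd {n : ℕ} (σ : Equiv.Perm (ZMod (2 * n)))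
    (S : Set (ZMod (2 * n))) (i : ZMod (2 * n)) : ZMod (2 * n) :=
  if i ∈ S then i else σ i

open scoped Classical in
/-- The intersection form `I_φ` of the framed chord diagram `σ`, evaluated on the
chords whose `∞`-endpoints are `p` and `q` (so the ordered endpoint pairs are
`(p, σ p)` and `(q, σ q)`): it is `E(x,y)` plus the number of ordered pairs
`(a, σ a)` forming a chord with `a ∈ (p, σ p)` and `σ a ∈ (q, σ q)`, in `ZMod 2`. -/
noncomputable def interForm (n : ℕ) (σ : Equiv.Perm (ZMod (2 * n)))
    (p q : ZMod (2 * n)) : ZMod 2 :=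
  (if Interlaced n p (σ p) q (σ q) then 1 else 0) +
    (({a : ZMod (2 * n) | a ∈ arc n p (σ p) ∧ σ a ∈ arc n q (σ q)}).ncard : ZMod 2)

/-!
Write `β(U, V)` for the number, mod 2, of points of `U` whose partner under `σ` lies in `V`,
and `A p` for the arc `(p, σ p)`. Bicolourability says exactly that every arc `A p` has even
size. As `A (σ x)` is the complement of `A x ∪ {x, σ x}`, and a chord not interlaced with `y`
has both or neither of its ends in `A y`, the value `β(A p, A q)` is the same for all four
orientations `p ∈ {x, σ x}`, `q ∈ {y, σ y}`; so the intersection form does not see the framing.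
Counting mod 2, the common neighbours of `x` and `y` number `β(A x, A y) + |A x ∩ A y|`, and
`|A x ∩ A y|` is even: the same change of orientation turns it into the size of the
intersection of two disjoint arcs.
-/

open Function

section Involution

open scoped Classical

variable {M : Type*} [Fintype M]

theorem ncard_setOf_cast {R : Type*} [AddCommMonoidWithOne R] (p : M → Prop) [DecidablePred p] :
    (({a | p a} : Set M).ncard : R) = ∑ a, if p a then 1 else 0 := by
  rw [Set.ncard_eq_toFinset_card', Set.toFinset_ofPred, Finset.natCast_card_filter]

variable {σ : Equiv.Perm M} (hσ : Involutive σ)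
include hσ

theorem sum_boole_and_comm (p q : M → Prop) :
    (∑ a, if p a ∧ q (σ a) then 1 else 0 : ZMod 2) = ∑ a, if q a ∧ p (σ a) then 1 else 0 := by
  rw [← Equiv.sum_comp σ]
  simp only [hσ _, and_comm]

theorem sum_boole_and_self_eq_zero (hfix : ∀ a, σ a ≠ a) (p : M → Prop) :
    (∑ a, if p a ∧ p (σ a) then 1 else 0 : ZMod 2) = 0 := by
  refine Finset.sum_involution (fun a _ => σ a) (fun a _ => ?_) (fun a _ _ => hfix a)
    (fun a _ => Finset.mem_univ _) (fun a _ => hσ a)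
  simp only [hσ a, and_comm, CharTwo.add_self_eq_zero]

theorem sum_boole_mem_eq_sum_boole_mem_and_not_mem (hfix : ∀ a, σ a ≠ a) (U : Set M) :
    (∑ a, if a ∈ U then 1 else 0 : ZMod 2) = ∑ a, if a ∈ U ∧ σ a ∉ U then 1 else 0 := by
  have hsplit : ∀ a, (if a ∈ U then 1 else 0 : ZMod 2) =
      (if a ∈ U ∧ σ a ∈ U then 1 else 0) + if a ∈ U ∧ σ a ∉ U then 1 else 0 := by
    intro a
    by_cases ha : a ∈ U <;> by_cases hσa : σ a ∈ U <;> simp [ha, hσa]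
  rw [Finset.sum_congr rfl fun a _ => hsplit a, Finset.sum_add_distrib,
    sum_boole_and_self_eq_zero hσ hfix, zero_add]

theorem sum_boole_mem_and_not_mem_and_xor (A B : Set M) :
    (∑ a, if a ∈ A ∧ σ a ∉ A ∧ Xor (a ∈ B) (σ a ∈ B) then 1 else 0 : ZMod 2) =
      (∑ a, if a ∈ A ∧ σ a ∈ B then 1 else 0) + ∑ a, if a ∈ A ∧ a ∈ B then 1 else 0 := by
  have hpoint : ∀ a, (if a ∈ A ∧ σ a ∉ A ∧ Xor (a ∈ B) (σ a ∈ B) then 1 else 0 : ZMod 2) +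
      (if a ∈ A ∧ σ a ∈ A ∧ σ a ∈ B then 1 else 0) + (if a ∈ A ∧ σ a ∈ A ∧ a ∈ B then 1 else 0) =
      (if a ∈ A ∧ σ a ∈ B then 1 else 0) + (if a ∈ A ∧ a ∈ B then 1 else 0) := by
    intro a
    by_cases hA : a ∈ A <;> by_cases hσA : σ a ∈ A <;> by_cases hB : a ∈ B <;>
      by_cases hσB : σ a ∈ B <;> simp [hA, hσA, hB, hσB, CharTwo.add_self_eq_zero]
  have hreindex : (∑ a, if a ∈ A ∧ σ a ∈ A ∧ σ a ∈ B then 1 else 0 : ZMod 2) =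
      ∑ a, if a ∈ A ∧ σ a ∈ A ∧ a ∈ B then 1 else 0 := by
    rw [← Equiv.sum_comp σ]
    simp only [hσ _, and_left_comm]
  rw [← Finset.sum_add_distrib, ← Finset.sum_congr rfl fun a _ => hpoint a,
    Finset.sum_add_distrib, Finset.sum_add_distrib, hreindex, add_assoc,
    CharTwo.add_self_eq_zero, add_zero]

end Involution

theorem val_sub_eq_zero_iff {m : ℕ} {a b : ZMod m} : (a - b).val = 0 ↔ a = b := by
  rw [ZMod.val_eq_zero, sub_eq_zero]

section Arc

variable {n : ℕ} [NeZero n]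

theorem val_sub_add_val_sub (a b c : ZMod (2 * n)) :
    (a - b).val + (b - c).val = (a - c).val ∨
      (a - b).val + (b - c).val = (a - c).val + 2 * n := by
  have h := ZMod.val_add (a - b) (b - c)
  rw [sub_add_sub_cancel] at h
  have := ZMod.val_lt (a - b)
  have := ZMod.val_lt (b - c)
  rcases lt_or_ge ((a - b).val + (b - c).val) (2 * n) with hlt | hge
  · rw [Nat.mod_eq_of_lt hlt] at h
    omega
  · rw [Nat.mod_eq_sub_mod hge, Nat.mod_eq_of_lt (by omega)] at h
    omega

theorem mem_arc {a b c : ZMod (2 * n)} :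
    c ∈ arc n a b ↔ 0 < (c - a).val ∧ (c - a).val < (b - a).val := by
  constructor
  · rintro ⟨s, hs, hsb, rfl⟩
    have hs2n : s < 2 * n := hsb.trans (ZMod.val_lt _)
    rw [add_sub_cancel_left, ZMod.val_natCast, Nat.mod_eq_of_lt hs2n]
    exact ⟨hs, hsb⟩
  · rintro ⟨hc, hcb⟩
    exact ⟨(c - a).val, hc, hcb, by rw [ZMod.natCast_zmod_val, add_sub_cancel]⟩

theorem mem_arc_swap {a b c : ZMod (2 * n)} (hab : a ≠ b) :
    c ∈ arc n b a ↔ c ≠ a ∧ c ≠ b ∧ c ∉ arc n a b := by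
  simp only [mem_arc, ne_eq, ← val_sub_eq_zero_iff (a := c)]
  have := mt val_sub_eq_zero_iff.mp hab
  have := val_sub_add_val_sub c b a
  have := val_sub_add_val_sub a b a
  have := ZMod.val_lt (c - a)
  have := ZMod.val_lt (c - b)
  have := ZMod.val_lt (b - a)
  rw [sub_self, ZMod.val_zero] at *
  omega

open scoped Classical in
theorem sum_arc_add_sum_arc_swap {G : Type*} [AddCommMonoid G] {a b : ZMod (2 * n)}
    (hab : a ≠ b) (g : ZMod (2 * n) → G) :
    (∑ c, if c ∈ arc n a b then g c else 0) + (∑ c, if c ∈ arc n b a then g c else 0) +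
      g a + g b = ∑ c, g c := by
  have hpoint : ∀ c, (if c ∈ arc n a b then g c else 0) + (if c ∈ arc n b a then g c else 0) +
      (if c = a then g c else 0) + (if c = b then g c else 0) = g c := by
    intro c
    have hba := mem_arc_swap (c := c) hab
    have hab' := mem_arc_swap (c := c) hab.symm
    by_cases hca : c = a
    · subst hca; simp_all
    by_cases hcb : c = b
    · subst hcb; simp_all
    by_cases h : c ∈ arc n a b <;> simp_all
  simp only [← Finset.sum_congr rfl fun c _ => hpoint c, Finset.sum_add_distrib,
    Finset.sum_ite_eq', Finset.mem_univ, if_true]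

open scoped Classical in
theorem sum_boole_mem_arc_swap_and {a b : ZMod (2 * n)} (hab : a ≠ b) {P : ZMod (2 * n) → Prop}
    (hP : P a ↔ P b) (hsum : (∑ c, if P c then 1 else 0 : ZMod 2) = 0) :
    (∑ c, if c ∈ arc n b a ∧ P c then 1 else 0 : ZMod 2) =
      ∑ c, if c ∈ arc n a b ∧ P c then 1 else 0 := by
  have h := sum_arc_add_sum_arc_swap hab fun c => (if P c then 1 else 0 : ZMod 2)
  simp only [hP, add_assoc, CharTwo.add_self_eq_zero, add_zero, hsum, ← ite_and,
    CharTwo.add_eq_zero] at h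
  exact h.symm

end Arc

section Interlaced

variable {n : ℕ} {a b c d : ZMod (2 * n)}

theorem interlaced_iff : Interlaced n a b c d ↔ Xor (c ∈ arc n a b) (d ∈ arc n a b) :=
  Iff.rfl

theorem not_interlaced_iff : ¬Interlaced n a b c d ↔ (c ∈ arc n a b ↔ d ∈ arc n a b) := by
  rw [interlaced_iff, xor_iff_not_iff, not_not]

theorem interlaced_swap_right : Interlaced n a b d c ↔ Interlaced n a b c d := by
  rw [interlaced_iff, interlaced_iff, xor_comm]

variable [NeZero n]

theorem interlaced_swap_left (hab : a ≠ b) (hca : c ≠ a) (hcb : c ≠ b) (hda : d ≠ a)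
    (hdb : d ≠ b) : Interlaced n b a c d ↔ Interlaced n a b c d := by
  rw [interlaced_iff, interlaced_iff, mem_arc_swap hab, mem_arc_swap hab]
  simp only [hca, hcb, hda, hdb, ne_eq, not_false_eq_true, true_and, xor_not_not]

theorem interlaced_comm (hab : a ≠ b) (hca : c ≠ a) (hcb : c ≠ b) (hda : d ≠ a)
    (hdb : d ≠ b) (hcd : c ≠ d) : Interlaced n a b c d ↔ Interlaced n c d a b := by
  simp only [interlaced_iff, Xor, mem_arc]
  have := mt val_sub_eq_zero_iff.mp hab.symm
  have := mt val_sub_eq_zero_iff.mp hca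
  have := mt val_sub_eq_zero_iff.mp hcb
  have := mt val_sub_eq_zero_iff.mp hda
  have := mt val_sub_eq_zero_iff.mp hdb
  have := mt val_sub_eq_zero_iff.mp hcd.symm
  have := val_sub_add_val_sub c b a
  have := val_sub_add_val_sub d b a
  have := val_sub_add_val_sub a c a
  have := val_sub_add_val_sub b c a
  have := val_sub_add_val_sub d c a
  have := ZMod.val_lt (c - b)
  have := ZMod.val_lt (d - b)
  have := ZMod.val_lt (a - c)
  have := ZMod.val_lt (b - c)
  have := ZMod.val_lt (d - c)
  have := ZMod.val_lt (b - a)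
  have := ZMod.val_lt (c - a)
  have := ZMod.val_lt (d - a)
  rw [sub_self, ZMod.val_zero] at *
  constructor <;> intro h <;> omega

theorem disjoint_arc_arc (hca : c ≠ a) (hc : c ∉ arc n a b) (hd : d ∉ arc n a b)
    (ha : a ∉ arc n c d) : Disjoint (arc n a b) (arc n c d) := by
  rw [Set.disjoint_left]
  intro e he
  simp only [mem_arc] at *
  have := mt val_sub_eq_zero_iff.mp hca
  have := val_sub_add_val_sub a c a
  have := val_sub_add_val_sub e c a
  have := val_sub_add_val_sub d c a
  have := ZMod.val_lt (d - a)
  have := ZMod.val_lt (e - a)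
  have := ZMod.val_lt (c - a)
  rw [sub_self, ZMod.val_zero] at *
  omega

end Interlaced

theorem inftyEnd_eq_or {n : ℕ} (σ : Equiv.Perm (ZMod (2 * n))) (S : Set (ZMod (2 * n)))
    (x : ZMod (2 * n)) : inftyEnd σ S x = x ∨ inftyEnd σ S x = σ x := by
  unfold inftyEnd
  split_ifs <;> simp

section ChordDiagram

open scoped Classical

variable {n : ℕ} [NeZero n] {σ : Equiv.Perm (ZMod (2 * n))} (hσ : Involutive σ)
  (hfix : ∀ i, σ i ≠ i) {x y p q : ZMod (2 * n)}
include hσ hfix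

theorem sum_boole_mem_arc_eq_zero (hbic : ∀ x, Even (interNbrCount n σ x)) (p : ZMod (2 * n)) :
    (∑ c, if c ∈ arc n p (σ p) then 1 else 0 : ZMod 2) = 0 := by
  rw [sum_boole_mem_eq_sum_boole_mem_and_not_mem hσ hfix]
  exact (ncard_setOf_cast _).symm.trans (hbic p).natCast_zmod_two

theorem sum_boole_mem_chord_arc_and (hp : p = x ∨ p = σ x) {P : ZMod (2 * n) → Prop}
    (hP : P x ↔ P (σ x)) (hsum : (∑ c, if P c then 1 else 0 : ZMod 2) = 0) :
    (∑ c, if c ∈ arc n p (σ p) ∧ P c then 1 else 0 : ZMod 2) =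
      ∑ c, if c ∈ arc n x (σ x) ∧ P c then 1 else 0 := by
  rcases hp with rfl | rfl
  · rfl
  · rw [hσ x]
    exact sum_boole_mem_arc_swap_and (hfix x).symm hP hsum

theorem exists_chord_end_not_mem_arc (c : ZMod (2 * n)) :
    ∃ p, (p = x ∨ p = σ x) ∧ c ∉ arc n p (σ p) := by
  by_cases hc : c ∈ arc n x (σ x)
  · refine ⟨σ x, Or.inr rfl, ?_⟩
    rw [hσ x, mem_arc_swap (hfix x).symm]
    exact fun h => h.2.2 hc
  · exact ⟨x, Or.inl rfl, hc⟩

theorem interlaced_chord_iff (hyx : y ≠ x) (hyσx : y ≠ σ x) (hp : p = x ∨ p = σ x)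
    (hq : q = y ∨ q = σ y) : Interlaced n p (σ p) q (σ q) ↔ Interlaced n x (σ x) y (σ y) := by
  have hσyx : σ y ≠ x := hσ.eq_iff.not.mpr hyσx
  have hσyσx : σ y ≠ σ x := σ.injective.ne hyx
  have hleft : Interlaced n (σ x) x y (σ y) ↔ Interlaced n x (σ x) y (σ y) :=
    interlaced_swap_left (hfix x).symm hyx hyσx hσyx hσyσx
  rcases hp with rfl | rfl <;> rcases hq with rfl | rfl <;>
    simp only [hσ _, interlaced_swap_right, hleft]

variable (hyx : y ≠ x) (hyσx : y ≠ σ x) (hxy : ¬Interlaced n x (σ x) y (σ y))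
include hyx hyσx hxy

theorem mem_arc_iff_of_not_interlaced (hp : p = x ∨ p = σ x) (hq : q = y ∨ q = σ y) :
    (q ∈ arc n p (σ p) ↔ σ q ∈ arc n p (σ p)) ∧ (p ∈ arc n q (σ q) ↔ σ p ∈ arc n q (σ q)) := by
  have hxσy : x ≠ σ y := fun h => hyσx (hσ.eq_iff.mp h.symm)
  have hyx' : ¬Interlaced n y (σ y) x (σ x) := fun h => hxy <|
    (interlaced_comm (hfix x).symm hyx hyσx (hσ.eq_iff.not.mpr hyσx) (σ.injective.ne hyx)
      (hfix y).symm).mpr h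
  exact ⟨not_interlaced_iff.mp ((interlaced_chord_iff hσ hfix hyx hyσx hp hq).not.mpr hxy),
    not_interlaced_iff.mp ((interlaced_chord_iff hσ hfix hyx.symm hxσy hq hp).not.mpr hyx')⟩

theorem sum_boole_cross_chord_arc (hbic : ∀ x, Even (interNbrCount n σ x))
    (hp : p = x ∨ p = σ x) (hq : q = y ∨ q = σ y) :
    (∑ c, if c ∈ arc n p (σ p) ∧ σ c ∈ arc n q (σ q) then 1 else 0 : ZMod 2) =
      ∑ c, if c ∈ arc n x (σ x) ∧ σ c ∈ arc n y (σ y) then 1 else 0 := by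
  have hsum : ∀ r, (∑ c, if σ c ∈ arc n r (σ r) then 1 else 0 : ZMod 2) = 0 := fun r => by
    rw [Equiv.sum_comp σ fun c => if c ∈ arc n r (σ r) then (1 : ZMod 2) else 0]
    exact sum_boole_mem_arc_eq_zero hσ hfix hbic r
  rw [sum_boole_and_comm hσ, sum_boole_mem_chord_arc_and hσ hfix hq ?_ (hsum p),
    sum_boole_and_comm hσ, sum_boole_mem_chord_arc_and hσ hfix hp ?_ (hsum y)]
  · rw [hσ x]
    exact (mem_arc_iff_of_not_interlaced hσ hfix hyx hyσx hxy (Or.inl rfl) (Or.inl rfl)).2.symm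
  · rw [hσ y]
    exact (mem_arc_iff_of_not_interlaced hσ hfix hyx hyσx hxy hp (Or.inl rfl)).1.symm

theorem sum_boole_mem_arc_and_mem_arc_eq_zero (hbic : ∀ x, Even (interNbrCount n σ x)) :
    (∑ c, if c ∈ arc n x (σ x) ∧ c ∈ arc n y (σ y) then 1 else 0 : ZMod 2) = 0 := by
  obtain ⟨p, hp, hyp⟩ := exists_chord_end_not_mem_arc hσ hfix (x := x) y
  obtain ⟨q, hq, hxq⟩ := exists_chord_end_not_mem_arc hσ hfix (x := y) x
  have hqp : q ≠ p := by
    rcases hp with rfl | rfl <;> rcases hq with rfl | rfl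
    exacts [hyx, hσ.eq_iff.not.mpr hyσx, hyσx, σ.injective.ne hyx]
  have hyU := (mem_arc_iff_of_not_interlaced hσ hfix hyx hyσx hxy hp (Or.inl rfl)).1
  have hxV := (mem_arc_iff_of_not_interlaced hσ hfix hyx hyσx hxy (Or.inl rfl) hq).2
  have hdisj : Disjoint (arc n p (σ p)) (arc n q (σ q)) := by
    refine disjoint_arc_arc hqp ?_ ?_ ?_
    · rcases hq with rfl | rfl
      exacts [hyp, hyU.not.mp hyp]
    · rcases hq with rfl | rfl
      exacts [hyU.not.mp hyp, by rwa [hσ]]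
    · rcases hp with rfl | rfl
      exacts [hxq, hxV.not.mp hxq]
  calc (∑ c, if c ∈ arc n x (σ x) ∧ c ∈ arc n y (σ y) then 1 else 0 : ZMod 2)
      = ∑ c, if c ∈ arc n p (σ p) ∧ c ∈ arc n y (σ y) then 1 else 0 :=
        (sum_boole_mem_chord_arc_and hσ hfix hp
          (mem_arc_iff_of_not_interlaced hσ hfix hyx hyσx hxy (Or.inl rfl) (Or.inl rfl)).2
          (sum_boole_mem_arc_eq_zero hσ hfix hbic y)).symm
    _ = ∑ c, if c ∈ arc n y (σ y) ∧ c ∈ arc n p (σ p) then 1 else 0 := by simp only [and_comm]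
    _ = ∑ c, if c ∈ arc n q (σ q) ∧ c ∈ arc n p (σ p) then 1 else 0 :=
        (sum_boole_mem_chord_arc_and hσ hfix hq hyU (sum_boole_mem_arc_eq_zero hσ hfix hbic p)).symm
    _ = 0 := Finset.sum_eq_zero fun c _ => if_neg fun h => Set.disjoint_left.mp hdisj h.2 h.1

end ChordDiagram

theorem stmt17_general (n : ℕ) (hn : 1 ≤ n) (σ : Equiv.Perm (ZMod (2 * n)))
    (hinv : ∀ i, σ (σ i) = i) (hfix : ∀ i, σ i ≠ i)
    (hbic : ∀ x : ZMod (2 * n), Even (interNbrCount n σ x))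
    (S : Set (ZMod (2 * n))) :
    ∀ x y : ZMod (2 * n), y ≠ x → y ≠ σ x →
      ¬ Interlaced n x (σ x) y (σ y) →
      interForm n σ (inftyEnd σ S x) (inftyEnd σ S y) =
        (commonNbrCount n σ x y : ZMod 2) := by
  intro x y hyx hyσx hxy
  have : NeZero n := ⟨by omega⟩
  have hp := inftyEnd_eq_or σ S x
  have hq := inftyEnd_eq_or σ S y
  classical
  rw [interForm, if_neg ((interlaced_chord_iff hinv hfix hyx hyσx hp hq).not.mpr hxy), zero_add,
    commonNbrCount, ncard_setOf_cast, ncard_setOf_cast,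
    sum_boole_cross_chord_arc hinv hfix hyx hyσx hxy hbic hp hq]
  simp only [interlaced_iff]
  rw [sum_boole_mem_and_not_mem_and_xor hinv,
    sum_boole_mem_arc_and_mem_arc_eq_zero hinv hfix hyx hyσx hxy hbic, add_zero]

/-- For a bicolourable chord diagram `σ` (every chord interlaces an even number of
chords) with any framing `S`, and for distinct non-interlaced chords `x`, `y`, the
intersection form equals the number of common interlaced neighbours mod 2. -/
theorem stmt17 (n : ℕ) (hn : 1 ≤ n) (σ : Equiv.Perm (ZMod (2 * n)))
    (hinv : ∀ i, σ (σ i) = i) (hfix : ∀ i, σ i ≠ i)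
    (hbic : ∀ x : ZMod (2 * n), Even (interNbrCount n σ x))
    (S : Set (ZMod (2 * n))) (hS : IsFraming n σ S) :
    ∀ x y : ZMod (2 * n), y ≠ x → y ≠ σ x →
      ¬ Interlaced n x (σ x) y (σ y) →
      interForm n σ (inftyEnd σ S x) (inftyEnd σ S y) =
        (commonNbrCount n σ x y : ZMod 2) :=
  stmt17_general n hn σ hinv hfix hbic S
end
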